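/- arXiv:2302.03903 — 3 statements merged into one kernel-verified Lean document; each statement's English description precedes it below -/
import Mathlib

section
/- Let p, L, M be positive natural numbers and let A be a p×L complex matrix (A : Matrix (Fin p) (Fin L) ℂ) with full row rank, i.e., A.rank = p. Then the set of L×M complex matrices Z for which the product A * Z fails to have full rank, i.e., {Z : Matrix (Fin L) (Fin M) ℂ | (A * Z).rank ≠ min p M}, has Lebesgue measure (volume) zero. -/
/-!
The rank of `A * Z` is at most `k = min p M`, with equality as soon as the leading `k × k` minor
of `A * Z` is nonzero. That minor is a polynomial in the entries of `Z`; it is not identically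
zero, since for a right inverse `B` of `A` it equals `1` at `Z = B * E`, where `E` is the
rectangular identity matrix. Finally, the zero set of a nonzero polynomial is Lebesgue-null, by
induction on the number of variables and Fubini: a nonzero one-variable polynomial has only
finitely many roots.
-/

open MeasureTheory

noncomputable instance matrixMeasureSpace {n m : Type*} [Fintype n] [Fintype m] :
    MeasureSpace (Matrix n m ℂ) :=
  inferInstanceAs (MeasureSpace (n → m → ℂ))

namespace MvPolynomial

theorem measurable_eval {R σ : Type*} [CommSemiring R] [MeasurableSpace R] [MeasurableAdd₂ R]
    [MeasurableMul₂ R] (p : MvPolynomial σ R) : Measurable fun x : σ → R => eval x p := by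
  induction p using MvPolynomial.induction_on with
  | C c => simp
  | add p q hp hq => simp only [map_add]; fun_prop
  | mul_X p i hp => simp only [map_mul, eval_X]; fun_prop

theorem eval_cons_eq_eval_eval_finSuccEquiv {R : Type*} [CommSemiring R] {n : ℕ}
    (p : MvPolynomial (Fin (n + 1)) R) (z : R) (s : Fin n → R) :
    eval (Fin.cons z s) p = eval s ((finSuccEquiv R n p).eval (C z)) := by
  rw [eval_eq_eval_mv_eval', ← Polynomial.eval_map_apply, eval_C]

variable {K : Type*} [Field K] [MeasurableSpace K] [MeasurableSingletonClass K] [MeasurableAdd₂ K]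
  [MeasurableMul₂ K] (μ : Measure K) [NullSingletonClass μ] [SigmaFinite μ]

theorem measure_pi_fin_setOf_eval_eq_zero :
    ∀ {n : ℕ} {p : MvPolynomial (Fin n) K}, p ≠ 0 →
      Measure.pi (fun _ => μ) {x | eval x p = 0} = 0
  | 0, p, hp => by
    obtain ⟨c, rfl⟩ := C_surjective (Fin 0) p
    have hc : c ≠ 0 := by rintro rfl; exact hp C_0
    simp [hc]
  | n + 1, p, hp => by
    set F := finSuccEquiv K n p
    have hF : F ≠ 0 := (map_ne_zero_iff _ (finSuccEquiv K n).injective).mpr hp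
    have hS : MeasurableSet {x | eval x p = 0} := measurable_eval p (measurableSet_singleton 0)
    have hsplit := (measurePreserving_piFinSuccAbove (fun _ : Fin (n + 1) => μ) 0).symm
    rw [← hsplit.measure_preimage_equiv,
      Measure.measure_prod_null (hS.preimage hsplit.measurable)]
    -- off the finitely many roots `z` of `F`, the slice polynomial `F(z)` is nonzero
    have hroots : {z : K | F.eval (C z) = 0}.Finite :=
      (Polynomial.finite_setOfPred_isRoot hF).preimage (C_injective _ K).injOn
    filter_upwards [measure_eq_zero_iff_ae_notMem.mp (hroots.measure_zero μ)] with z hz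
    simp only [Set.preimage, MeasurableEquiv.piFinSuccAbove_symm_apply, Fin.insertNthEquiv_zero,
      Pi.zero_apply]
    change Measure.pi _ {s | eval (Fin.cons z s) p = 0} = 0
    simpa only [eval_cons_eq_eval_eval_finSuccEquiv] using measure_pi_fin_setOf_eval_eq_zero hz

theorem measure_pi_setOf_eval_eq_zero {σ : Type*} [Fintype σ] {p : MvPolynomial σ K}
    (hp : p ≠ 0) : Measure.pi (fun _ : σ => μ) {x | eval x p = 0} = 0 := by
  set e := Fintype.equivFin σ
  have hrename : rename e p ≠ 0 := (map_ne_zero_iff _ (rename_injective e e.injective)).mpr hp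
  have hcomp (x : σ → K) : MeasurableEquiv.piCongrLeft (fun _ => K) e x ∘ e = x := by
    ext i
    exact Equiv.piCongrLeft_apply_apply (fun _ => K) e x i
  have hpre : MeasurableEquiv.piCongrLeft (fun _ => K) e ⁻¹' {y | eval y (rename e p) = 0} =
      {x | eval x p = 0} := by
    ext x
    simp only [Set.mem_preimage, Set.mem_ofPred_eq, eval_rename, hcomp]
  rw [← hpre, (measurePreserving_piCongrLeft (fun _ => μ) e).measure_preimage_equiv]
  exact measure_pi_fin_setOf_eval_eq_zero μ hrename

end MvPolynomial

theorem MeasureTheory.measurePreserving_uncurry {ι κ X : Type*} [Fintype ι] [Fintype κ]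
    [MeasurableSpace X] (μ : ι → κ → Measure X) [∀ i j, SigmaFinite (μ i j)] :
    MeasurePreserving Function.uncurry (Measure.pi fun i => Measure.pi (μ i))
      (Measure.pi fun p : ι × κ => μ p.1 p.2) := by
  have hmeas : Measurable (Function.uncurry : (ι → κ → X) → ι × κ → X) :=
    (MeasurableEquiv.curry ι κ X).symm.measurable
  refine ⟨hmeas, ?_⟩
  refine (Measure.pi_eq fun s hs => ?_).symm
  have hbox : Function.uncurry ⁻¹' Set.univ.pi s =
      Set.univ.pi fun i => Set.univ.pi fun j => s (i, j) := by
    ext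
    simp
  rw [Measure.map_apply hmeas (MeasurableSet.univ_pi hs), hbox, Measure.pi_pi,
    Fintype.prod_prod_type]
  simp_rw [Measure.pi_pi]

namespace Matrix

variable {K R m n k l : Type*} [Fintype k] [DecidableEq k]

theorem card_le_rank_of_det_submatrix_ne_zero [Field K] [Fintype n] {A : Matrix m n K}
    {r : k → m} {c : k → n} (h : (A.submatrix r c).det ≠ 0) : Fintype.card k ≤ A.rank :=
  (rank_of_det_ne_zero h).symm.le.trans (rank_submatrix_le A r c)

theorem exists_mul_eq_one_of_rank_eq [Field K] [Fintype m] [DecidableEq m] [Fintype n]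
    {A : Matrix m n K} (hA : A.rank = Fintype.card m) : ∃ B : Matrix n m K, A * B = 1 := by
  classical
  have hrange : LinearMap.range A.mulVecLin = ⊤ :=
    Submodule.eq_top_of_finrank_eq (by rw [← rank, hA, Module.finrank_fintype_fun_eq_card])
  obtain ⟨g, hg⟩ := A.mulVecLin.exists_rightInverse_of_surjective hrange
  refine ⟨LinearMap.toMatrix' g, ?_⟩
  rw [← LinearMap.toMatrix'_toLin' A, ← LinearMap.toMatrix'_comp, Matrix.toLin'_apply', hg,
    LinearMap.toMatrix'_id]

-- Without the type ascription on `C`, `*` is elaborated with the `CStarMatrix` instance.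
open MvPolynomial in
theorem eval_det_submatrix_mul_mvPolynomialX [CommRing R] [Fintype l] (A : Matrix m l R)
    (r : k → m) (c : k → n) (Z : Matrix l n R) :
    eval (fun p : l × n => Z p.1 p.2)
        ((A.map (C : R →+* MvPolynomial (l × n) R) * mvPolynomialX l n R).submatrix r c).det =
      ((A * Z).submatrix r c).det := by
  rw [RingHom.map_det]
  congr 1
  ext i j
  simp [Matrix.mul_apply]

theorem volume_setOf_det_submatrix_mul_eq_zero [Fintype l] [Fintype n] (A : Matrix m l ℂ)
    (r : k → m) (c : k → n) {Z₀ : Matrix l n ℂ} (hZ₀ : ((A * Z₀).submatrix r c).det ≠ 0) :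
    volume {Z : Matrix l n ℂ | ((A * Z).submatrix r c).det = 0} = 0 := by
  set q := ((A.map (MvPolynomial.C : ℂ →+* MvPolynomial (l × n) ℂ) *
    mvPolynomialX l n ℂ).submatrix r c).det
  have hq : q ≠ 0 := fun hq => hZ₀ <| by
    rw [← eval_det_submatrix_mul_mvPolynomialX A r c Z₀]
    exact (congrArg _ hq).trans (map_zero _)
  simp_rw [← eval_det_submatrix_mul_mvPolynomialX A r c]
  exact ((measurePreserving_uncurry fun _ _ => volume).measure_preimage
    (MvPolynomial.measurable_eval q (measurableSet_singleton 0)).nullMeasurableSet).trans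
    (MvPolynomial.measure_pi_setOf_eval_eq_zero volume hq)

end Matrix

theorem rank_deficient_product_null_general (p L M : ℕ)
    (A : Matrix (Fin p) (Fin L) ℂ) (hA : A.rank = p) :
    volume {Z : Matrix (Fin L) (Fin M) ℂ | (A * Z).rank ≠ min p M} = 0 := by
  set k := min p M
  set r : Fin k → Fin p := Fin.castLE (min_le_left p M)
  set c : Fin k → Fin M := Fin.castLE (min_le_right p M)
  obtain ⟨B, hB⟩ := A.exists_mul_eq_one_of_rank_eq (by rwa [Fintype.card_fin])
  set E : Matrix (Fin p) (Fin M) ℂ := Matrix.of fun i j => if (i : ℕ) = j then 1 else 0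
  have hE : (A * (B * E)).submatrix r c = 1 := by
    rw [← Matrix.mul_assoc, hB, Matrix.one_mul]
    ext i j
    simp [E, r, c, Matrix.one_apply, Fin.ext_iff]
  refine measure_mono_null (fun Z hZ => ?_)
    (A.volume_setOf_det_submatrix_mul_eq_zero r c (Z₀ := B * E) (by simp [hE]))
  by_contra hdet
  refine hZ (le_antisymm (le_min (Matrix.rank_le_height _) (Matrix.rank_le_width _)) ?_)
  simpa using Matrix.card_le_rank_of_det_submatrix_ne_zero hdet

theorem rank_deficient_product_null (p L M : ℕ) (hp : 0 < p) (hL : 0 < L) (hM : 0 < M)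
    (A : Matrix (Fin p) (Fin L) ℂ) (hA : A.rank = p) :
    volume {Z : Matrix (Fin L) (Fin M) ℂ | (A * Z).rank ≠ min p M} = 0 :=
  rank_deficient_product_null_general p L M A hA
end

section
/- Let p, L, M be positive natural numbers, let A be a p×L complex matrix (A : Matrix (Fin p) (Fin L) ℂ) with A.rank = p, and let μ be a measure on the space of L×M complex matrices Matrix (Fin L) (Fin M) ℂ that is absolutely continuous with respect to the Lebesgue measure (volume). Then μ {Z : Matrix (Fin L) (Fin M) ℂ | (A * Z).rank ≠ min p M} = 0; that is, for μ-almost every Z, the product A * Z has full rank min(p, M). -/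
/-!
Fix `k = min p M` and the leading `k × k` minor of `A * Z`. As a function of the entries of `Z`
it is a polynomial, and it is not identically zero: since `A` has full row rank, some `Z₀` makes
`A * Z₀` the `p × M` "identity", whose leading minor is `1`. The zero set of a nonzero complex
polynomial is Lebesgue-null (induction on the number of variables, Fubini, and finiteness of the
roots of a one-variable polynomial), and wherever the minor is nonzero `A * Z` has rank `k`.
-/

open MeasureTheory

namespace MvPolynomial

theorem ae_eval_fin_ne_zero :
    ∀ {n : ℕ} {P : MvPolynomial (Fin n) ℂ}, P ≠ 0 → ∀ᵐ x : Fin n → ℂ, eval x P ≠ 0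
  | 0, P, hP => ae_of_all _ fun x hx =>
      hP (funext fun y => by rwa [Subsingleton.elim y x, map_zero])
  | n + 1, P, hP => by
    obtain ⟨k, hk⟩ : ∃ k, (finSuccEquiv ℂ n P).coeff k ≠ 0 := by
      by_contra! h
      exact hP ((finSuccEquiv ℂ n).injective (by ext1 k; simp [h k]))
    have hslice : ∀ᵐ y : Fin n → ℂ, ∀ᵐ a : ℂ, eval (Fin.cons a y) P ≠ 0 := by
      filter_upwards [ae_eval_fin_ne_zero hk] with y hy
      have hne : (finSuccEquiv ℂ n P).map (eval y) ≠ 0 := fun h =>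
        hy (by simpa using congr_arg (Polynomial.coeff · k) h)
      refine ae_iff.2 (measure_mono_null (fun a ha => ?_)
        ((Polynomial.finite_setOfPred_isRoot hne).measure_zero _))
      simpa [eval_eq_eval_mv_eval'] using ha
    have hmeas : MeasurableSet {q : ℂ × (Fin n → ℂ) | eval (Fin.cons q.1 q.2) P ≠ 0} :=
      (measurableSet_singleton 0).compl.preimage
        ((continuous_eval P).comp (continuous_fst.finCons continuous_snd)).measurable
    have hprod : ∀ᵐ q : ℂ × (Fin n → ℂ), eval (Fin.cons q.1 q.2) P ≠ 0 :=
      (Measure.ae_prod_iff_ae_ae hmeas).2 ((Measure.ae_ae_comm hmeas).2 hslice)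
    filter_upwards [(volume_preserving_piFinSuccAbove (fun _ => ℂ) 0).quasiMeasurePreserving.ae
      hprod] with x hx
    simpa using hx

theorem ae_eval_ne_zero {σ : Type*} [Fintype σ] {P : MvPolynomial σ ℂ} (hP : P ≠ 0) :
    ∀ᵐ x : σ → ℂ, eval x P ≠ 0 := by
  let e := Fintype.equivFin σ
  have hP' : rename e P ≠ 0 := fun h => hP (rename_injective _ e.injective (by rw [h, map_zero]))
  filter_upwards [(volume_measurePreserving_piCongrLeft (fun _ => ℂ) e.symm).symm
    |>.quasiMeasurePreserving.ae (ae_eval_fin_ne_zero hP')] with x hx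
  simpa [eval_rename, MeasurableEquiv.piCongrLeft, Function.comp_def] using hx

end MvPolynomial

theorem volume_measurePreserving_uncurry (ι κ α : Type*) [Fintype ι] [Fintype κ] [MeasureSpace α]
    [SigmaFinite (volume : Measure α)] :
    MeasurePreserving (Function.uncurry : (ι → κ → α) → ι × κ → α) volume volume := by
  have hmeas : Measurable (Function.uncurry : (ι → κ → α) → ι × κ → α) :=
    (MeasurableEquiv.curry ι κ α).symm.measurable
  refine ⟨hmeas, (Measure.pi_eq fun s hs => ?_).symm⟩
  have hbox : Function.uncurry ⁻¹' Set.univ.pi s =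
      Set.univ.pi fun i => Set.univ.pi fun j => s (i, j) := by
    ext x
    simp
  rw [Measure.map_apply hmeas (.univ_pi hs), hbox, volume_pi_pi]
  simp_rw [volume_pi_pi]
  rw [Fintype.prod_prod_type]

namespace Matrix

theorem ae_eval_ne_zero {m n : Type*} [Fintype m] [Fintype n] {P : MvPolynomial (m × n) ℂ}
    (hP : P ≠ 0) : ∀ᵐ Z : Matrix m n ℂ, MvPolynomial.eval (fun q => Z q.1 q.2) P ≠ 0 :=
  (volume_measurePreserving_uncurry m n ℂ).quasiMeasurePreserving.ae
    (MvPolynomial.ae_eval_ne_zero hP)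

theorem ae_det_submatrix_mul_ne_zero {l m n k : Type*} [Fintype l] [Fintype m] [Fintype n]
    [Fintype k] [DecidableEq k] (A : Matrix m l ℂ) (r : k → m) (c : k → n)
    (h : ∃ Z₀ : Matrix l n ℂ, ((A * Z₀).submatrix r c).det ≠ 0) :
    ∀ᵐ Z : Matrix l n ℂ, ((A * Z).submatrix r c).det ≠ 0 := by
  -- Without the explicit `σ`, `*` elaborates as `CStarMatrix` multiplication.
  let P := ((A.map (MvPolynomial.C (σ := l × n)) * mvPolynomialX l n ℂ).submatrix r c).det
  have heval : ∀ Z : Matrix l n ℂ,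
      MvPolynomial.eval (fun q => Z q.1 q.2) P = ((A * Z).submatrix r c).det := by
    intro Z
    have hX : (mvPolynomialX l n ℂ).map (MvPolynomial.eval fun q => Z q.1 q.2) = Z :=
      mvPolynomialX_map_eval₂ _ Z
    rw [RingHom.map_det, RingHom.mapMatrix_apply, ← submatrix_map, Matrix.map_mul, map_map, hX]
    simp [Function.comp_def]
  obtain ⟨Z₀, hZ₀⟩ := h
  have hP : P ≠ 0 := fun h0 => hZ₀ (by rw [← heval, h0, map_zero])
  filter_upwards [ae_eval_ne_zero hP] with Z hZ
  rwa [← heval]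

theorem le_rank_of_det_submatrix_ne_zero {R m n k : Type*} [CommRing R] [IsDomain R]
    [Fintype n] [Fintype k] [DecidableEq k] (B : Matrix m n R) (r : k → m) (c : k → n)
    (h : (B.submatrix r c).det ≠ 0) : Fintype.card k ≤ B.rank :=
  rank_of_det_ne_zero h ▸ B.rank_submatrix_le r c

theorem exists_mul_eq_of_rank_eq_card {K m n l : Type*} [Field K] [Fintype m] [Fintype l]
    (A : Matrix m l K) (hA : A.rank = Fintype.card m) (E : Matrix m n K) :
    ∃ Z : Matrix l n K, A * Z = E := by
  have hsurj : Function.Surjective A.mulVecLin := by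
    rw [← LinearMap.range_eq_top]
    apply Submodule.eq_top_of_finrank_eq
    rw [← rank, hA, Module.finrank_fintype_fun_eq_card]
  choose v hv using fun j => hsurj (fun i => E i j)
  refine ⟨of fun k j => v j k, ?_⟩
  ext i j
  simpa [mul_apply, mulVec, dotProduct] using congr_fun (hv j) i

end Matrix

theorem rank_deficient_product_null_of_absolutelyContinuous_general
    (p L M : ℕ)
    (A : Matrix (Fin p) (Fin L) ℂ) (hA : A.rank = p)
    (μ : Measure (Matrix (Fin L) (Fin M) ℂ)) (hμ : μ ≪ volume) :
    μ {Z : Matrix (Fin L) (Fin M) ℂ | (A * Z).rank ≠ min p M} = 0 := by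
  let r : Fin (min p M) → Fin p := Fin.castLE (min_le_left p M)
  let c : Fin (min p M) → Fin M := Fin.castLE (min_le_right p M)
  obtain ⟨Z₀, hZ₀⟩ := A.exists_mul_eq_of_rank_eq_card (by rw [hA, Fintype.card_fin])
    (Matrix.of fun (i : Fin p) (j : Fin M) => if (i : ℕ) = j then (1 : ℂ) else 0)
  have hminor : (A * Z₀).submatrix r c = 1 := by
    ext i j
    simp [hZ₀, r, c, Matrix.one_apply, Fin.val_inj]
  have hae := A.ae_det_submatrix_mul_ne_zero r c ⟨Z₀, by simp [hminor]⟩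
  refine ae_iff.1 (hμ.ae_le (hae.mono fun Z hZ => le_antisymm ?_ ?_))
  · exact le_min (A * Z).rank_le_height (A * Z).rank_le_width
  · simpa using (A * Z).le_rank_of_det_submatrix_ne_zero r c hZ

theorem rank_deficient_product_null_of_absolutelyContinuous
    (p L M : ℕ) (hp : 0 < p) (hL : 0 < L) (hM : 0 < M)
    (A : Matrix (Fin p) (Fin L) ℂ) (hA : A.rank = p)
    (μ : Measure (Matrix (Fin L) (Fin M) ℂ)) (hμ : μ ≪ volume) :
    μ {Z : Matrix (Fin L) (Fin M) ℂ | (A * Z).rank ≠ min p M} = 0 :=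
  rank_deficient_product_null_of_absolutelyContinuous_general p L M A hA μ hμ
end

section
/- Let p ≤ L and M be positive natural numbers, let A be a p×L complex matrix (A : Matrix (Fin p) (Fin L) ℂ) with A.rank = p, and let U₁ be an L×p complex matrix with orthonormal columns (U₁ᴴ * U₁ = 1) satisfying A * (U₁ * U₁ᴴ) = A. Then for every L×M complex matrix Z, the rank of A * Z equals the rank of U₁ᴴ * Z, i.e., (A * Z).rank = (U₁ᴴ * Z).rank. -/
open Matrix

theorem rank_mul_eq_rank_reduced
    (p L M : ℕ) (hp : 0 < p) (hpL : p ≤ L) (hM : 0 < M)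
    (A : Matrix (Fin p) (Fin L) ℂ) (hA : A.rank = p)
    (U₁ : Matrix (Fin L) (Fin p) ℂ)
    (hU : U₁ᴴ * U₁ = 1) (hAU : A * (U₁ * U₁ᴴ) = A) :
    ∀ Z : Matrix (Fin L) (Fin M) ℂ, (A * Z).rank = (U₁ᴴ * Z).rank := by
  intro Z
  -- A * U₁ has rank p
  have hAU1 : (A * U₁).rank = p := by
    apply le_antisymm
    · simpa using (A * U₁).rank_le_card_width
    · have h1 : A.rank ≤ (A * U₁).rank := by
        have : (A * U₁) * U₁ᴴ = A := by rw [Matrix.mul_assoc]; exact hAU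
        calc A.rank = ((A * U₁) * U₁ᴴ).rank := by rw [this]
          _ ≤ (A * U₁).rank := rank_mul_le_left _ _
      omega
  -- hence A * U₁ is invertible
  have hunit : IsUnit (A * U₁).det := by
    rw [← isUnit_iff_isUnit_det, ← Matrix.mulVec_surjective_iff_isUnit]
    have hrange : LinearMap.range (A * U₁).mulVecLin = ⊤ := by
      apply Submodule.eq_top_of_finrank_eq
      rw [show Module.finrank ℂ (LinearMap.range (A * U₁).mulVecLin) = (A * U₁).rank from rfl,
        hAU1]
      simp [Module.finrank_pi]
    intro v
    have := hrange ▸ Submodule.mem_top (x := v) (R := ℂ)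
    obtain ⟨w, hw⟩ := this
    exact ⟨w, hw⟩
  have key : A * Z = (A * U₁) * (U₁ᴴ * Z) := by
    calc A * Z = (A * (U₁ * U₁ᴴ)) * Z := by rw [hAU]
      _ = (A * U₁) * (U₁ᴴ * Z) := by simp [Matrix.mul_assoc]
  rw [key, rank_mul_eq_right_of_isUnit_det _ _ hunit]
end
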